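/- arXiv:2408.09203 — 2 statements merged into one kernel-verified Lean document; each statement's English description precedes it below -/
import Mathlib

section
/- Let G be a group and let p, v : ℤ → G satisfy v(i)*p(i) = p(i)*v(i) = 1 for all i. Assume that for all a, b, c, p(c)*v(b)*p(a)*v(c)*p(b)*v(a) = 1. Then for all a, b, c, d, the elements p(d)*v(c) and p(b)*v(a) commute: (p(d)*v(c))*(p(b)*v(a)) = (p(b)*v(a))*(p(d)*v(c)). -/
/-!
Writing `v = p⁻¹`, the identity of Theorem A says that the twisted product `p z * (p y)⁻¹ * p x`
does not change when the outer indices are swapped. Applying this once to the middle three factors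
of `p d * (p c)⁻¹ * p b * (p a)⁻¹` (after inversion) exchanges `c` and `a`, and once to the first
three exchanges `d` and `b`; together they swap the two pairs.
-/

section OuterSymmetric

variable {ι G : Type*} [Group G] {f : ι → G}

theorem mul_inv_mul_swap_of_forall_eq_one
    (h : ∀ a b c, f c * (f b)⁻¹ * f a * (f c)⁻¹ * f b * (f a)⁻¹ = 1) (x y z : ι) :
    f z * (f y)⁻¹ * f x = f x * (f y)⁻¹ * f z :=
  calc f z * (f y)⁻¹ * f x = ((f z)⁻¹ * f y * (f x)⁻¹)⁻¹ :=
        eq_inv_of_mul_eq_one_left (by simpa only [mul_assoc] using h x y z)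
    _ = f x * (f y)⁻¹ * f z := by group

variable (hf : ∀ x y z, f z * (f y)⁻¹ * f x = f x * (f y)⁻¹ * f z)
include hf

theorem inv_mul_inv_swap_of_mul_inv_mul_swap (x y z : ι) :
    (f z)⁻¹ * f y * (f x)⁻¹ = (f x)⁻¹ * f y * (f z)⁻¹ := by
  simpa only [mul_inv_rev, inv_inv, mul_assoc] using (congrArg (·⁻¹) (hf x y z)).symm

theorem commute_mul_inv_of_mul_inv_mul_swap (a b c d : ι) :
    Commute (f d * (f c)⁻¹) (f b * (f a)⁻¹) :=
  calc f d * (f c)⁻¹ * (f b * (f a)⁻¹)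
      = f d * ((f c)⁻¹ * f b * (f a)⁻¹) := by simp only [mul_assoc]
    _ = f d * ((f a)⁻¹ * f b * (f c)⁻¹) := by rw [inv_mul_inv_swap_of_mul_inv_mul_swap hf]
    _ = f d * (f a)⁻¹ * f b * (f c)⁻¹ := by simp only [mul_assoc]
    _ = f b * (f a)⁻¹ * f d * (f c)⁻¹ := by rw [hf]
    _ = f b * (f a)⁻¹ * (f d * (f c)⁻¹) := by simp only [mul_assoc]

end OuterSymmetric

theorem theoremB_commute_general {G : Type*} [Group G] (p v : ℤ → G)
    (h1 : ∀ i, v i * p i = 1)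
    (hA : ∀ a b c : ℤ, p c * v b * p a * v c * p b * v a = 1) (a b c d : ℤ) :
    (p d * v c) * (p b * v a) = (p b * v a) * (p d * v c) := by
  obtain rfl : v = fun i => (p i)⁻¹ := funext fun i => eq_inv_of_mul_eq_one_left (h1 i)
  exact commute_mul_inv_of_mul_inv_mul_swap (mul_inv_mul_swap_of_forall_eq_one hA) a b c d

theorem theoremB_commute {G : Type*} [Group G] (p v : ℤ → G)
    (h1 : ∀ i, v i * p i = 1) (h2 : ∀ i, p i * v i = 1)
    (hA : ∀ a b c : ℤ, p c * v b * p a * v c * p b * v a = 1) (a b c d : ℤ) :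
    (p d * v c) * (p b * v a) = (p b * v a) * (p d * v c) :=
  theoremB_commute_general p v h1 hA a b c d
end

section
/- Let G be a group and let p, v : ℤ → G satisfy v(i)*p(i) = p(i)*v(i) = 1 for all i. Assume that for all a and b: p(1)*v(b)*p(a) = p(a)*v(b)*p(1) and v(1)*p(b)*v(a) = v(a)*p(b)*v(1). Then for all a, b, c: v(a)*p(b)*v(c) = v(c)*p(b)*v(a). -/
/-!
Put `v = p⁻¹` and `x i = v i * p 1`. The swap identity for `v 1` says exactly that `x a`
commutes with `(x b)⁻¹ = v 1 * p b`, so the `x i` pairwise commute, and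
`v a * p b * v c * p 1 = x a * (x b)⁻¹ * x c` is symmetric in `a` and `c`.
-/

theorem Commute.mul_inv_mul_comm {G : Type*} [Group G] {a b c : G}
    (hab : Commute a b) (hac : Commute a c) (hbc : Commute b c) :
    a * b⁻¹ * c = c * b⁻¹ * a := by
  rw [hab.inv_right.eq, mul_assoc, hac.eq, ← mul_assoc, hbc.inv_left.eq]

section

variable {G ι : Type*} [Group G] {f : ι → G} {g : G}

theorem commute_inv_mul_of_swap (h : ∀ i j, g⁻¹ * f j * (f i)⁻¹ = (f i)⁻¹ * f j * g⁻¹)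
    (i j : ι) : Commute ((f i)⁻¹ * g) ((f j)⁻¹ * g) := by
  have hinv : Commute ((f i)⁻¹ * g) ((f j)⁻¹ * g)⁻¹ := by
    calc ((f i)⁻¹ * g) * ((f j)⁻¹ * g)⁻¹ = (f i)⁻¹ * f j := by group
      _ = g⁻¹ * f j * (f i)⁻¹ * g := by rw [h i j]; group
      _ = ((f j)⁻¹ * g)⁻¹ * ((f i)⁻¹ * g) := by group
  simpa using hinv.inv_right

theorem inv_mul_mul_inv_comm_of_swap
    (h : ∀ i j, g⁻¹ * f j * (f i)⁻¹ = (f i)⁻¹ * f j * g⁻¹) (a b c : ι) :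
    (f a)⁻¹ * f b * (f c)⁻¹ = (f c)⁻¹ * f b * (f a)⁻¹ := by
  have hx := commute_inv_mul_of_swap h
  refine mul_right_cancel (b := g) ?_
  calc (f a)⁻¹ * f b * (f c)⁻¹ * g
      = ((f a)⁻¹ * g) * ((f b)⁻¹ * g)⁻¹ * ((f c)⁻¹ * g) := by group
    _ = ((f c)⁻¹ * g) * ((f b)⁻¹ * g)⁻¹ * ((f a)⁻¹ * g) :=
        (hx a b).mul_inv_mul_comm (hx a c) (hx b c)
    _ = (f c)⁻¹ * f b * (f a)⁻¹ * g := by group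

end

theorem odd_case_theoremA_general {G : Type*} [Group G] (p v : ℤ → G)
    (h1 : ∀ i, v i * p i = 1)
    (hswap2 : ∀ a b : ℤ, v 1 * p b * v a = v a * p b * v 1) (a b c : ℤ) :
    v a * p b * v c = v c * p b * v a := by
  have hv : v = fun i => (p i)⁻¹ := funext fun i => eq_inv_of_mul_eq_one_left (h1 i)
  subst hv
  exact inv_mul_mul_inv_comm_of_swap hswap2 a b c

theorem odd_case_theoremA {G : Type*} [Group G] (p v : ℤ → G)
    (h1 : ∀ i, v i * p i = 1) (h2 : ∀ i, p i * v i = 1)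
    (hswap1 : ∀ a b : ℤ, p 1 * v b * p a = p a * v b * p 1)
    (hswap2 : ∀ a b : ℤ, v 1 * p b * v a = v a * p b * v 1) (a b c : ℤ) :
    v a * p b * v c = v c * p b * v a :=
  odd_case_theoremA_general p v h1 hswap2 a b c
end
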